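/- Fix p ≠ 0 and ν ∈ ℝ. Define F_ν : ℝ × ℝ³ → ℝ × ℝ³ by F_ν(θ, a, b, c) = (θ, a − (ν/p) sin θ, b − (ν/p)(1 − cos θ), c + ν(sin 2θ/(4p²) + (1/p)(a − sin θ/p)(cos θ − 1))). Then F_ν is equivariant under the left action of the discrete Heisenberg group ℤ³ on the second factor: for every γ ∈ ℤ³, θ ∈ ℝ and g ∈ ℝ³, if F_ν(θ, g) = (θ, g̃), then F_ν(θ, γ·g) = (θ, γ·g̃), where γ·g denotes Heisenberg left multiplication. -/
import Mathlib


open Real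

/-- The Heisenberg group product in `(a,b,c)`-coordinates. -/
def heisMul (g₁ g₂ : ℝ × ℝ × ℝ) : ℝ × ℝ × ℝ :=
  (g₁.1 + g₂.1, g₁.2.1 + g₂.2.1, g₁.2.2 + g₂.2.2 + g₁.1 * g₂.2.1)

/-- Embedding of the discrete Heisenberg group `ℤ³` into the real Heisenberg group. -/
def intCast3 (h : ℤ × ℤ × ℤ) : ℝ × ℝ × ℝ := ((h.1 : ℝ), (h.2.1 : ℝ), (h.2.2 : ℝ))

/-- The isotopy `F_ν` conjugating the normal Hamiltonian flow to the `p`-standard flow. -/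
noncomputable def Fiso (ν p : ℝ) (w : ℝ × (ℝ × ℝ × ℝ)) : ℝ × (ℝ × ℝ × ℝ) :=
  ⟨w.1,
    w.2.1 - ν / p * Real.sin w.1,
    w.2.2.1 - ν / p * (1 - Real.cos w.1),
    w.2.2.2 + ν * (Real.sin (2 * w.1) / (4 * p ^ 2)
      + 1 / p * (w.2.1 - Real.sin w.1 / p) * (Real.cos w.1 - 1))⟩

theorem stmt18 (ν p : ℝ) (hp : p ≠ 0) (γ : ℤ × ℤ × ℤ) (θ : ℝ) (g g' : ℝ × ℝ × ℝ)
    (hg : Fiso ν p (θ, g) = (θ, g')) :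
    Fiso ν p (θ, heisMul (intCast3 γ) g) = (θ, heisMul (intCast3 γ) g') := by
  simp only [Fiso, heisMul, intCast3, Prod.mk.injEq, Prod.ext_iff] at hg ⊢
  obtain ⟨-, h1, h2, h3⟩ := hg
  refine ⟨trivial, by rw [← h1]; ring, by rw [← h2]; ring, by rw [← h2, ← h3]; ring⟩
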